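/- Let p(x) = 𝔼_{x₀}[N(x; α x₀, σ² I)] be a mixture of Gaussians with means α x₀ over a distribution of x₀ in ℝⁿ, where α ∈ ℝ and σ > 0. Then Tweedie's formula holds: ∇_x log p(x) = (α·𝔼[x₀ | x_t = x] − x)/σ², where 𝔼[x₀ | x_t = x] is the posterior mean of x₀ given the observation x_t = α x₀ + σ ε with ε ~ N(0, I). -/

import Mathlib

/-- Gaussian density with mean `μ` and covariance `σ² I` on `ℝⁿ`. -/
noncomputable def gaussDensity (n : ℕ) (σ : ℝ) (μ x : EuclideanSpace ℝ (Fin n)) : ℝ :=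
  (2 * Real.pi * σ ^ 2) ^ (-(n : ℝ) / 2) * Real.exp (-‖x - μ‖ ^ 2 / (2 * σ ^ 2))

lemma gaussDensity_pos (n : ℕ) (σ : ℝ) (hσ : 0 < σ) (μ x : EuclideanSpace ℝ (Fin n)) :
    0 < gaussDensity n σ μ x := by
  unfold gaussDensity
  positivity

lemma my_hg_const_mul {E : Type*} [NormedAddCommGroup E] [InnerProductSpace ℝ E]
    [CompleteSpace E] {f : E → ℝ} {g x : E} (h : HasGradientAt f g x) (c : ℝ) :
    HasGradientAt (fun y => c * f y) (c • g) x := by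
  rw [hasGradientAt_iff_hasFDerivAt] at *
  simpa [map_smul] using h.const_mul c

lemma my_hg_sum {E : Type*} [NormedAddCommGroup E] [InnerProductSpace ℝ E]
    [CompleteSpace E] {ι : Type*} (s : Finset ι) {f : ι → E → ℝ} {g : ι → E} {x : E}
    (h : ∀ j ∈ s, HasGradientAt (f j) (g j) x) :
    HasGradientAt (fun y => ∑ j ∈ s, f j y) (∑ j ∈ s, g j) x := by
  rw [hasGradientAt_iff_hasFDerivAt]
  simp only [hasGradientAt_iff_hasFDerivAt] at h
  simpa [map_sum] using HasFDerivAt.fun_sum h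

lemma my_hg_log {E : Type*} [NormedAddCommGroup E] [InnerProductSpace ℝ E]
    [CompleteSpace E] {f : E → ℝ} {g x : E} (h : HasGradientAt f g x) (hx : f x ≠ 0) :
    HasGradientAt (fun y => Real.log (f y)) ((f x)⁻¹ • g) x := by
  rw [hasGradientAt_iff_hasFDerivAt] at *
  simpa [map_smul] using h.log hx

lemma gauss_hasGradientAt (n : ℕ) (σ : ℝ) (hσ : 0 < σ) (μ x : EuclideanSpace ℝ (Fin n)) :
    HasGradientAt (gaussDensity n σ μ) (((σ ^ 2)⁻¹ * gaussDensity n σ μ x) • (μ - x)) x := by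
  rw [hasGradientAt_iff_hasFDerivAt]
  have h1 : HasFDerivAt (fun y : EuclideanSpace ℝ (Fin n) => ‖y - μ‖ ^ 2)
      (2 • (innerSL ℝ (x - μ))) x := by
    simpa using ((hasFDerivAt_id x).sub_const μ).norm_sq
  have h2 : HasFDerivAt (fun y : EuclideanSpace ℝ (Fin n) => -‖y - μ‖ ^ 2 / (2 * σ ^ 2))
      ((-(2 * σ ^ 2)⁻¹) • (2 • (innerSL ℝ (x - μ)))) x := by
    have := h1.const_mul (-(2 * σ ^ 2)⁻¹)
    convert this using 2 with y
    all_goals first | rfl | ring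
  have h4 := (h2.exp).const_mul ((2 * Real.pi * σ ^ 2) ^ (-(n : ℝ) / 2))
  have key : (InnerProductSpace.toDual ℝ (EuclideanSpace ℝ (Fin n)))
        (((σ ^ 2)⁻¹ * gaussDensity n σ μ x) • (μ - x))
      = (2 * Real.pi * σ ^ 2) ^ (-(n : ℝ) / 2) •
          Real.exp (-‖x - μ‖ ^ 2 / (2 * σ ^ 2)) • -(2 * σ ^ 2)⁻¹ • 2 • (innerSL ℝ) (x - μ) := by
    apply ContinuousLinearMap.ext
    intro v
    have hσ2 : (σ:ℝ) ^ 2 ≠ 0 := by positivity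
    simp only [InnerProductSpace.toDual_apply_apply, ContinuousLinearMap.smul_apply,
      innerSL_apply_apply, smul_eq_mul, real_inner_smul_left, inner_sub_left, gaussDensity]
    field_simp
    ring
  rw [key]
  exact h4

theorem stmt_13 {n m : ℕ} (α σ : ℝ) (hσ : 0 < σ)
    (w : Fin m → ℝ) (hw : ∀ j, 0 ≤ w j) (hw1 : (∑ j, w j) = 1)
    (μ : Fin m → EuclideanSpace ℝ (Fin n)) (x : EuclideanSpace ℝ (Fin n)) :
    gradient (fun y => Real.log (∑ j, w j * gaussDensity n σ (α • μ j) y)) x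
      = (σ ^ 2)⁻¹ •
        (α • ((∑ j, w j * gaussDensity n σ (α • μ j) x)⁻¹ •
              ∑ j, (w j * gaussDensity n σ (α • μ j) x) • μ j) - x) := by
  have hS : 0 < ∑ j, w j * gaussDensity n σ (α • μ j) x := by
    obtain ⟨j, hj⟩ : ∃ j, w j ≠ 0 := by
      by_contra h; push_neg at h; simp [h] at hw1
    refine Finset.sum_pos'
      (fun i _ => mul_nonneg (hw i) (gaussDensity_pos n σ hσ _ x).le)
      ⟨j, Finset.mem_univ j,
        mul_pos ((hw j).lt_of_ne (Ne.symm hj)) (gaussDensity_pos n σ hσ _ x)⟩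
  have H : HasGradientAt (fun y => Real.log (∑ j, w j * gaussDensity n σ (α • μ j) y))
      ((∑ j, w j * gaussDensity n σ (α • μ j) x)⁻¹ •
        ∑ j, (w j • (((σ ^ 2)⁻¹ * gaussDensity n σ (α • μ j) x) • (α • μ j - x)))) x :=
    my_hg_log (my_hg_sum Finset.univ
      (fun j _ => my_hg_const_mul (gauss_hasGradientAt n σ hσ _ x) (w j))) hS.ne'
  rw [H.gradient]
  have hT : (∑ j, w j • (((σ ^ 2)⁻¹ * gaussDensity n σ (α • μ j) x) • (α • μ j - x)))
      = (σ ^ 2)⁻¹ • (α • (∑ j, (w j * gaussDensity n σ (α • μ j) x) • μ j)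
          - (∑ j, w j * gaussDensity n σ (α • μ j) x) • x) := by
    simp only [smul_sub, smul_smul, Finset.smul_sum, Finset.sum_smul,
      ← Finset.sum_sub_distrib]
    refine Finset.sum_congr rfl fun j _ => ?_
    congr 1 <;> (congr 1; ring)
  rw [hT, smul_comm ((∑ j, w j * gaussDensity n σ (α • μ j) x)⁻¹) ((σ ^ 2)⁻¹),
    smul_sub, inv_smul_smul₀ hS.ne',
    smul_comm ((∑ j, w j * gaussDensity n σ (α • μ j) x)⁻¹) α]
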